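/- A joint quantum state is the pair of its projection and extracted channel: Let τ be a quantum state on ℂ^n ⊗ ℂ^m (a positive semidefinite trace-1 matrix indexed by Fin n × Fin m) such that proj(τ) is positive definite. Then for all i, j ∈ Fin n and k, ℓ ∈ Fin m: conj((√(proj τ) * extr(τ) k ℓ * √(proj τ)) i j) = τ (i,k) (j,ℓ), i.e. pair(proj(τ), extr(τ)) = τ. -/

import Mathlib

open Matrix
open scoped ComplexOrder

noncomputable section

/-- The positive semidefinite square root of a positive semidefinite matrix
(the definition `Matrix.PosSemidef.sqrt` of the older Mathlib, since removed). -/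
def Matrix.PosSemidef.sqrt {n : Type*} [Fintype n] [DecidableEq n] {𝕜 : Type*} [RCLike 𝕜]
    {A : Matrix n n 𝕜} (hA : A.PosSemidef) : Matrix n n 𝕜 :=
  hA.1.eigenvectorUnitary.1 * diagonal ((↑) ∘ Real.sqrt ∘ hA.1.eigenvalues) *
    (star hA.1.eigenvectorUnitary : Matrix n n 𝕜)

/-- Transpose of the first marginal of a joint quantum state. -/
def qproj {n m : ℕ} (τ : Matrix (Fin n × Fin m) (Fin n × Fin m) ℂ) :
    Matrix (Fin n) (Fin n) ℂ :=
  Matrix.of fun i j => ∑ k, τ (j, k) (i, k)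

/-- Channel extracted from a joint quantum state. -/
def qextr {n m : ℕ} (τ : Matrix (Fin n × Fin m) (Fin n × Fin m) ℂ)
    (h : (qproj τ).PosDef) : Fin m → Fin m → Matrix (Fin n) (Fin n) ℂ :=
  fun k ℓ => ∑ i, ∑ j, (starRingEnd ℂ) (τ (i, k) (j, ℓ))
    • ((h.posSemidef.sqrt)⁻¹ * Matrix.single i j 1 * (h.posSemidef.sqrt)⁻¹)

/-! Writing `B` for the entrywise conjugate of the `(k, ℓ)` block of `τ`, the extracted channel is
`√P⁻¹ * B * √P⁻¹` with `P = proj τ`. Since `√P * √P = P` is positive definite, `√P` is invertible,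
so conjugating by `√P` gives back `B`. -/

section Sqrt

variable {n : Type*} [Fintype n] [DecidableEq n] {𝕜 : Type*} [RCLike 𝕜] {A : Matrix n n 𝕜}

open scoped MatrixOrder

theorem Matrix.PosSemidef.sqrt_eq_cfcSqrt (hA : A.PosSemidef) : hA.sqrt = CFC.sqrt A := by
  rw [CFC.sqrt_eq_cfc, cfc_nnreal_eq_real _ A hA.nonneg, hA.1.cfc_eq]
  simp [IsHermitian.cfc, Matrix.PosSemidef.sqrt, Function.comp_def,
    max_eq_left (hA.eigenvalues_nonneg _)]

theorem Matrix.PosSemidef.sqrt_mul_sqrt (hA : A.PosSemidef) : hA.sqrt * hA.sqrt = A := by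
  rw [hA.sqrt_eq_cfcSqrt, CFC.sqrt_mul_sqrt_self A hA.nonneg]

theorem Matrix.PosDef.isUnit_det_sqrt (hA : A.PosDef) : IsUnit hA.posSemidef.sqrt.det := by
  have hdet : IsUnit (hA.posSemidef.sqrt.det * hA.posSemidef.sqrt.det) := by
    rw [← det_mul, hA.posSemidef.sqrt_mul_sqrt]
    exact hA.det_pos.ne'.isUnit
  exact isUnit_of_mul_isUnit_left hdet

end Sqrt

theorem Matrix.mul_nonsing_inv_mul_nonsing_inv_mul_cancel {n α : Type*} [Fintype n]
    [DecidableEq n] [CommRing α] {A : Matrix n n α} (B : Matrix n n α) (hA : IsUnit A.det) :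
    A * (A⁻¹ * B * A⁻¹) * A = B := by
  rw [mul_assoc, nonsing_inv_mul_cancel_right _ _ hA, mul_nonsing_inv_cancel_left _ _ hA]

theorem qextr_eq_sqrt_inv_mul_mul_sqrt_inv {n m : ℕ}
    (τ : Matrix (Fin n × Fin m) (Fin n × Fin m) ℂ) (h : (qproj τ).PosDef) (k ℓ : Fin m) :
    qextr τ h k ℓ = (h.posSemidef.sqrt)⁻¹ * (of fun i j => (starRingEnd ℂ) (τ (i, k) (j, ℓ))) *
      (h.posSemidef.sqrt)⁻¹ := by
  conv_rhs => rw [matrix_eq_sum_single (of _)]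
  simp only [qextr, Matrix.mul_sum, Matrix.sum_mul, of_apply]
  refine Finset.sum_congr rfl fun i _ => Finset.sum_congr rfl fun j _ => ?_
  rw [← Matrix.smul_mul, ← Matrix.mul_smul, smul_single, smul_eq_mul, mul_one]

theorem pair_proj_extr_general {n m : ℕ}
    (τ : Matrix (Fin n × Fin m) (Fin n × Fin m) ℂ)
    (hproj : (qproj τ).PosDef) :
    ∀ i (j : Fin n) k (ℓ : Fin m),
      (starRingEnd ℂ)
          ((hproj.posSemidef.sqrt * qextr τ hproj k ℓ * hproj.posSemidef.sqrt) i j)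
        = τ (i, k) (j, ℓ) := by
  intro i j k ℓ
  rw [qextr_eq_sqrt_inv_mul_mul_sqrt_inv,
    mul_nonsing_inv_mul_nonsing_inv_mul_cancel _ hproj.isUnit_det_sqrt, of_apply,
    Complex.conj_conj]

/-- A joint quantum state is the pair of its projection and extracted channel:
`pair(proj(τ), extr(τ)) = τ`. -/
theorem pair_proj_extr {n m : ℕ}
    (τ : Matrix (Fin n × Fin m) (Fin n × Fin m) ℂ)
    (hτ : τ.PosSemidef) (hτtr : τ.trace = 1)
    (hproj : (qproj τ).PosDef) :
    ∀ i (j : Fin n) k (ℓ : Fin m),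
      (starRingEnd ℂ)
          ((hproj.posSemidef.sqrt * qextr τ hproj k ℓ * hproj.posSemidef.sqrt) i j)
        = τ (i, k) (j, ℓ) :=
  pair_proj_extr_general τ hproj

end
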